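/- Let F be a distribution on [0,∞), Δ = (0,c], F ∈ ℒ_Δ, and let α be a function with α(x) < x/2, α(x) → ∞, such that F(x+Δ) is α-insensitive (F(x+y+Δ)/F(x+Δ) → 1 uniformly over |y| ≤ α(x)). If ∫_{(α(x), x−α(x)]} F(x+Δ−y) F(dy) = o(F(x+Δ)), then F ∈ 𝒮_Δ. -/

import Mathlib

open MeasureTheory Filter Set Topology

/-- Mass of the interval `(x, x+c]` under `μ`, i.e. `F(x+Δ)` for `Δ = (0,c]`. -/
noncomputable def tailI (μ : Measure ℝ) (c x : ℝ) : ℝ := (μ (Ioc x (x + c))).toReal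

/-- `F ∈ ℒ_Δ`: `x ↦ F(x+Δ)` is eventually positive and long-tailed. -/
def LongDelta (μ : Measure ℝ) (c : ℝ) : Prop :=
  (∀ᶠ x in atTop, 0 < tailI μ c x) ∧
  ∀ y : ℝ, 0 < y → Tendsto (fun x => tailI μ c (x + y) / tailI μ c x) atTop (𝓝 1)

/-- `F ∈ 𝒮_Δ`: Δ-subexponentiality. -/
def SDelta (μ : Measure ℝ) (c : ℝ) : Prop :=
  LongDelta μ c ∧
  Tendsto (fun x => tailI (μ.conv μ) c x / tailI μ c x) atTop (𝓝 2)

/-- almost decreasing function -/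
def AlmostDec (α : ℝ → ℝ) : Prop :=
  ∃ x₀ > (0:ℝ), ∃ K > (0:ℝ), ∀ x > x₀, ∀ y > (0:ℝ), α (x + y) ≤ K * α x

/-- `F ∈ 𝒟_Δ` -/
def DDelta (μ : Measure ℝ) (c : ℝ) : Prop := AlmostDec (tailI μ c)

/-- asymptotic to a non-increasing function (a.n.i.): locally bounded and positive on
`[x₀,∞)` and `sup_{t ≥ x} α(t) ∼ α(x)`, `inf_{x₀ ≤ t ≤ x} α(t) ∼ α(x)`. -/
def ANI (α : ℝ → ℝ) : Prop :=
  ∃ x₀ > (0:ℝ), (∀ x ∈ Ici x₀, 0 < α x) ∧ (∀ x : ℝ, BddAbove (α '' Icc x₀ x)) ∧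
    Tendsto (fun x => sSup (α '' Ici x) / α x) atTop (𝓝 1) ∧
    Tendsto (fun x => sInf (α '' Icc x₀ x) / α x) atTop (𝓝 1)

/-- `F ∈ 𝒜_Δ` -/
def ADelta (μ : Measure ℝ) (c : ℝ) : Prop := ANI (tailI μ c)

/-- `nconv μ n` is the `n`-fold convolution of `μ`, with `nconv μ 0 = δ₀`. -/
noncomputable def nconv (μ : Measure ℝ) : ℕ → Measure ℝ
  | 0 => Measure.dirac 0
  | n + 1 => (nconv μ n).conv μ

/-- `f ∈ ℒ` for densities. -/
def LongFun (f : ℝ → ℝ) : Prop :=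
  (∀ᶠ x in atTop, 0 < f x) ∧
  ∀ y : ℝ, Tendsto (fun x => f (x + y) / f x) atTop (𝓝 1)

/-- convolution of density functions -/
noncomputable def convFun (f g : ℝ → ℝ) (x : ℝ) : ℝ := ∫ y, f (x - y) * g y

/-- `f ∈ 𝒮`: subexponential density on ℝ. -/
def SubexpFun (f : ℝ → ℝ) : Prop :=
  LongFun f ∧ Tendsto (fun x => convFun f f x / f x) atTop (𝓝 2)

/-- `nconvFun f n` is the `(n+1)`-fold convolution of the density `f`. -/
noncomputable def nconvFun (f : ℝ → ℝ) : ℕ → ℝ → ℝ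
  | 0 => f
  | n + 1 => convFun (nconvFun f n) f



open ENNReal in
section
open ENNReal

section Aux
variable (μ : Measure ℝ) [IsProbabilityMeasure μ] (c : ℝ)

lemma meas_g : Measurable (fun u => μ (Ioc u (u+c))) := by
  have h1 : Monotone (fun u : ℝ => μ (Iic u)) := fun a b hab => measure_mono (Iic_subset_Iic.2 hab)
  have h2 : (fun u => μ (Ioc u (u+c))) = fun u => μ (Iic (u+c)) - μ (Iic u) := by
    funext u
    rcases le_or_gt u (u+c) with h|h
    · rw [← Iic_sdiff_Iic,
        measure_diff (Iic_subset_Iic.2 h) measurableSet_Iic.nullMeasurableSet (measure_ne_top μ _)]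
    · rw [Ioc_eq_empty (by linarith), measure_empty, eq_comm, tsub_eq_zero_iff_le]
      exact h1 h.le
  rw [h2]
  exact ((h1.measurable).comp (by measurability)).sub h1.measurable

lemma tailI_meas : Measurable (tailI μ c) := (meas_g μ c).ennreal_toReal

lemma tailI_nonneg (x : ℝ) : 0 ≤ tailI μ c x := ENNReal.toReal_nonneg

lemma tailI_le_one (x : ℝ) : tailI μ c x ≤ 1 := by
  rw [tailI, ← ENNReal.toReal_one]
  exact ENNReal.toReal_mono one_ne_top prob_le_one

lemma conv_tail_eq (x : ℝ) :
    tailI (μ.conv μ) c x = ∫ u, tailI μ c (x - u) ∂μ := by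
  have hmap : (μ.conv μ) (Ioc x (x+c)) = ∫⁻ u, μ (Ioc (x-u) (x-u+c)) ∂μ := by
    rw [Measure.conv, Measure.map_apply (by measurability) measurableSet_Ioc,
      Measure.prod_apply (by measurability)]
    congr 1; funext u
    congr 1
    ext v
    simp only [mem_preimage, mem_Ioc, mem_setOf_eq]
    constructor <;> intro ⟨h1, h2⟩ <;> constructor <;> linarith
  rw [tailI, hmap, ← integral_toReal]
  · rfl
  · exact ((meas_g μ c).comp (measurable_const.sub measurable_id)).aemeasurable
  · exact Eventually.of_forall fun u => lt_of_le_of_lt prob_le_one one_lt_top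

lemma aux_int (x : ℝ) : Integrable (fun u => tailI μ c (x - u)) μ := by
  apply Integrable.mono' (integrable_const (1:ℝ))
  · exact ((tailI_meas μ c).comp (measurable_const.sub measurable_id)).aestronglyMeasurable
  · refine Eventually.of_forall fun u => ?_
    rw [Real.norm_eq_abs, abs_of_nonneg (tailI_nonneg ..)]
    exact tailI_le_one ..

lemma split_eq (x a b : ℝ) (hab : a ≤ b) :
    ∫ u, tailI μ c (x-u) ∂μ = (∫ u in Iic a, tailI μ c (x-u) ∂μ)
      + (∫ u in Ioc a b, tailI μ c (x-u) ∂μ) + (∫ u in Ioi b, tailI μ c (x-u) ∂μ) := by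
  have h1 := integral_add_compl measurableSet_Iic (aux_int μ c x) (s := Iic a)
  rw [compl_Iic] at h1
  have h2 : Ioi a = Ioc a b ∪ Ioi b := (Ioc_union_Ioi_eq_Ioi hab).symm
  have hd : Disjoint (Ioc a b) (Ioi b) := by
    rw [disjoint_left]; intro u h1 h2; exact absurd h1.2 (not_le.2 h2)
  rw [← h1, h2, setIntegral_union hd measurableSet_Ioi
    ((aux_int μ c x).integrableOn) ((aux_int μ c x).integrableOn)]
  ring

lemma L_eq (x : ℝ) (s : Set ℝ) :
    ∫ u in s, tailI μ c (x-u) ∂μ = (∫⁻ u in s, μ (Ioc (x-u) (x-u+c)) ∂μ).toReal :=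
  integral_toReal ((meas_g μ c).comp (measurable_const.sub measurable_id)).aemeasurable
    (Eventually.of_forall fun u => lt_of_le_of_lt prob_le_one one_lt_top)

lemma lint_ne_top (x : ℝ) (s : Set ℝ) :
    (∫⁻ u in s, μ (Ioc (x-u) (x-u+c)) ∂μ) ≠ ⊤ := by
  refine ne_of_lt (lt_of_le_of_lt (lintegral_mono fun u => prob_le_one) ?_)
  rw [lintegral_one]
  calc (μ.restrict s) univ ≤ μ univ := Measure.restrict_le_self _
    _ = 1 := measure_univ
    _ < ⊤ := one_lt_top

lemma sym_eq (x a : ℝ) :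
    (∫⁻ u in Ioi (x-a), μ (Ioc (x-u) (x-u+c)) ∂μ)
      = ∫⁻ u, μ (Ioc (max (x-a) (x-u)) (x+c-u)) ∂μ := by
  set S : Set (ℝ×ℝ) := {p | x-a < p.1 ∧ x < p.1+p.2 ∧ p.1+p.2 ≤ x+c} with hSdef
  have hSm : MeasurableSet S := by
    have : S = ((fun p : ℝ×ℝ => p.1) ⁻¹' Ioi (x-a)) ∩ ((fun p : ℝ×ℝ => p.1+p.2) ⁻¹' Ioc x (x+c)) := by
      ext p; simp [hSdef, and_assoc]
    rw [this]
    exact (measurable_fst measurableSet_Ioi).inter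
      ((measurable_fst.add measurable_snd) measurableSet_Ioc)
  have h1 : (μ.prod μ) S = ∫⁻ u in Ioi (x-a), μ (Ioc (x-u) (x-u+c)) ∂μ := by
    rw [Measure.prod_apply hSm, ← lintegral_indicator measurableSet_Ioi]
    congr 1; funext u
    by_cases hu : u ∈ Ioi (x-a)
    · rw [indicator_of_mem hu]
      congr 1
      ext v
      simp only [mem_preimage, mem_setOf_eq, mem_Ioc, hSdef]
      rw [mem_Ioi] at hu
      constructor
      · rintro ⟨_, h2, h3⟩; constructor <;> linarith
      · rintro ⟨h2, h3⟩; refine ⟨hu, by linarith, by linarith⟩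
    · rw [indicator_of_notMem hu]
      rw [mem_Ioi, not_lt] at hu
      convert measure_empty (μ := μ)
      ext v
      simp only [mem_preimage, mem_setOf_eq, mem_empty_iff_false, iff_false, hSdef]
      rintro ⟨h2, _, _⟩; linarith
  have h2 : (μ.prod μ) S = (μ.prod μ) (Prod.swap ⁻¹' S) := by
    conv_lhs => rw [← Measure.prod_swap]
    rw [Measure.map_apply measurable_swap hSm]
  have h3 : (μ.prod μ) (Prod.swap ⁻¹' S) = ∫⁻ u, μ (Ioc (max (x-a) (x-u)) (x+c-u)) ∂μ := by
    rw [Measure.prod_apply (measurable_swap hSm)]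
    congr 1; funext u
    congr 1
    ext v
    simp only [mem_preimage, Prod.swap_prod_mk, mem_setOf_eq, mem_Ioc, lt_max_iff, max_lt_iff,
      hSdef, sup_lt_iff, lt_sup_iff]
    constructor
    · rintro ⟨h1', h2', h3'⟩
      exact ⟨⟨h1', by linarith⟩, by linarith⟩
    · rintro ⟨⟨h1', h2'⟩, h3'⟩
      exact ⟨h1', by linarith, by linarith⟩
  rw [← h1, h2, h3]



lemma J3_ge (x a : ℝ) :
    ∫ u in Iic a, tailI μ c (x-u) ∂μ ≤ ∫ u in Ioi (x-a), tailI μ c (x-u) ∂μ := by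
  rw [L_eq, L_eq, sym_eq]
  apply ENNReal.toReal_mono
  · refine ne_of_lt (lt_of_le_of_lt (lintegral_mono fun u => prob_le_one) ?_)
    rw [lintegral_one, measure_univ]; exact one_lt_top
  · calc ∫⁻ u in Iic a, μ (Ioc (x-u) (x-u+c)) ∂μ
        = ∫⁻ u in Iic a, μ (Ioc (max (x-a) (x-u)) (x+c-u)) ∂μ := by
          refine setLIntegral_congr_fun measurableSet_Iic (fun u hu => ?_)
          rw [mem_Iic] at hu
          rw [max_eq_right (by linarith : x-a ≤ x-u)]
          congr 1
          ring
      _ ≤ ∫⁻ u, μ (Ioc (max (x-a) (x-u)) (x+c-u)) ∂μ := setLIntegral_le_lintegral _ _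

lemma J3_le (x a : ℝ) (hc : 0 ≤ c) :
    ∫ u in Ioi (x-a), tailI μ c (x-u) ∂μ
      ≤ (∫ u in Iic a, tailI μ c (x-u) ∂μ) + ∫ u in Ioc a (a+c), tailI μ c (x-u) ∂μ := by
  rw [L_eq, L_eq, L_eq, sym_eq, ← ENNReal.toReal_add (lint_ne_top μ c x _) (lint_ne_top μ c x _)]
  apply ENNReal.toReal_mono
  · exact ENNReal.add_ne_top.2 ⟨lint_ne_top μ c x _, lint_ne_top μ c x _⟩
  calc ∫⁻ u, μ (Ioc (max (x-a) (x-u)) (x+c-u)) ∂μ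
      ≤ ∫⁻ u, (Iic (a+c)).indicator (fun u => μ (Ioc (x-u) (x-u+c))) u ∂μ := by
        apply lintegral_mono
        intro u
        beta_reduce
        by_cases hu : u ∈ Iic (a+c)
        · rw [indicator_of_mem hu]
          refine measure_mono fun v hv => ?_
          rw [mem_Ioc] at hv ⊢
          refine ⟨lt_of_le_of_lt (le_max_right _ _) hv.1, by linarith [hv.2]⟩
        · rw [indicator_of_notMem hu]
          rw [mem_Iic, not_le] at hu
          rw [Ioc_eq_empty, measure_empty]
          rw [not_lt]
          exact le_trans (by linarith) (le_max_left _ _)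
    _ = ∫⁻ u in Iic (a+c), μ (Ioc (x-u) (x-u+c)) ∂μ := by
        rw [lintegral_indicator measurableSet_Iic]
    _ = (∫⁻ u in Iic a, μ (Ioc (x-u) (x-u+c)) ∂μ)
          + ∫⁻ u in Ioc a (a+c), μ (Ioc (x-u) (x-u+c)) ∂μ := by
        rw [← lintegral_union measurableSet_Ioc
          (by rw [disjoint_left]; intro u h1 h2; exact absurd h2.1 (not_lt.2 h1)),
          Iic_union_Ioc_eq_Iic (by linarith)]

lemma mid_le (x a : ℝ) (hc : 0 ≤ c) :
    ∫ u in Ioc a (a+c), tailI μ c (x-u) ∂μ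
      ≤ (μ (Ioi a)).toReal * (tailI μ c (x-a-c) + tailI μ c (x-a)) := by
  have hpt : ∀ u ∈ Ioc a (a+c), tailI μ c (x-u) ≤ tailI μ c (x-a-c) + tailI μ c (x-a) := by
    intro u hu
    rw [mem_Ioc] at hu
    have hsub : Ioc (x-u) (x-u+c) ⊆ Ioc (x-a-c) (x-a-c+c) ∪ Ioc (x-a) (x-a+c) := by
      intro v hv
      rw [mem_Ioc] at hv
      rcases le_or_gt v (x-a) with h|h
      · left; rw [mem_Ioc]; constructor
        · linarith [hv.1, hu.2]
        · linarith
      · right; rw [mem_Ioc]; exact ⟨h, by linarith [hv.2, hu.1]⟩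
    calc tailI μ c (x-u) = (μ (Ioc (x-u) (x-u+c))).toReal := rfl
      _ ≤ ((μ (Ioc (x-a-c) (x-a-c+c))) + μ (Ioc (x-a) (x-a+c))).toReal := by
          apply ENNReal.toReal_mono
          · exact ENNReal.add_ne_top.2 ⟨measure_ne_top μ _, measure_ne_top μ _⟩
          · exact le_trans (measure_mono hsub) (measure_union_le _ _)
      _ = tailI μ c (x-a-c) + tailI μ c (x-a) := by
          rw [ENNReal.toReal_add (measure_ne_top μ _) (measure_ne_top μ _)]; rfl
  calc ∫ u in Ioc a (a+c), tailI μ c (x-u) ∂μ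
      ≤ ∫ _ in Ioc a (a+c), (tailI μ c (x-a-c) + tailI μ c (x-a)) ∂μ :=
        setIntegral_mono_on ((aux_int μ c x).integrableOn)
          (integrableOn_const (measure_ne_top μ _)) measurableSet_Ioc hpt
    _ = (μ (Ioc a (a+c))).toReal * (tailI μ c (x-a-c) + tailI μ c (x-a)) := by
        rw [setIntegral_const, smul_eq_mul]; rfl
    _ ≤ (μ (Ioi a)).toReal * (tailI μ c (x-a-c) + tailI μ c (x-a)) := by
        apply mul_le_mul_of_nonneg_right
        · exact ENNReal.toReal_mono (measure_ne_top μ _) (measure_mono Ioc_subset_Ioi_self)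
        · linarith [tailI_nonneg μ c (x-a-c), tailI_nonneg μ c (x-a)]

end Aux
lemma L1_bounds (μ : Measure ℝ) [IsProbabilityMeasure μ] (c : ℝ) (hsupp : μ (Iio 0) = 0)
    (x a ε' : ℝ) (ha : 0 ≤ a) (hε'0 : 0 ≤ ε') (hε'1 : ε' ≤ 1)
    (hb : ∀ u ∈ Icc 0 a, (1-ε') * tailI μ c x ≤ tailI μ c (x-u)
        ∧ tailI μ c (x-u) ≤ (1+ε') * tailI μ c x)
    (hGpos : 0 < tailI μ c x) :
    (1 - (μ (Ioi a)).toReal) * ((1-ε') * tailI μ c x) ≤ (∫ u in Iic a, tailI μ c (x-u) ∂μ)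
    ∧ (∫ u in Iic a, tailI μ c (x-u) ∂μ) ≤ (1+ε') * tailI μ c x := by
  have hae : Iic a =ᵐ[μ] Icc 0 a := by
    refine measure_symmDiff_eq_zero_iff.1 (measure_mono_null ?_ hsupp)
    intro u hu
    rw [mem_symmDiff] at hu
    simp only [mem_Iic, mem_Icc, mem_Iio, not_and, not_le] at hu ⊢
    rcases hu with ⟨h1, h2⟩ | ⟨⟨h1, h2⟩, h3⟩
    · by_contra h
      push_neg at h
      linarith [h2 h]
    · linarith
  have hres : μ.restrict (Iic a) = μ.restrict (Icc 0 a) := Measure.restrict_congr_set hae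
  have hLrw : (∫ u in Iic a, tailI μ c (x-u) ∂μ) = ∫ u in Icc 0 a, tailI μ c (x-u) ∂μ := by
    rw [hres]
  have hm1 : (μ (Icc 0 a)).toReal ≤ 1 := by
    rw [← ENNReal.toReal_one]
    exact ENNReal.toReal_mono one_ne_top prob_le_one
  have hm2 : 1 - (μ (Ioi a)).toReal ≤ (μ (Icc 0 a)).toReal := by
    have e1 : μ (Icc 0 a) = μ (Iic a) := (measure_congr hae).symm
    have e2 : (μ (Iic a)).toReal = 1 - (μ (Ioi a)).toReal := by
      rw [show Ioi a = (Iic a)ᶜ from compl_Iic.symm,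
        prob_compl_eq_one_sub measurableSet_Iic,
        ENNReal.toReal_sub_of_le prob_le_one one_ne_top, ENNReal.toReal_one]
      ring
    rw [e1, e2]
  constructor
  · calc (1 - (μ (Ioi a)).toReal) * ((1-ε') * tailI μ c x)
        ≤ (μ (Icc 0 a)).toReal * ((1-ε') * tailI μ c x) :=
          mul_le_mul_of_nonneg_right hm2 (by nlinarith)
      _ = ∫ _ in Icc 0 a, ((1-ε') * tailI μ c x) ∂μ := by rw [setIntegral_const, smul_eq_mul]; rfl
      _ ≤ ∫ u in Icc 0 a, tailI μ c (x-u) ∂μ :=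
          setIntegral_mono_on (integrableOn_const (measure_ne_top μ _))
            ((aux_int μ c x).integrableOn) measurableSet_Icc (fun u hu => (hb u hu).1)
      _ = ∫ u in Iic a, tailI μ c (x-u) ∂μ := hLrw.symm
  · calc (∫ u in Iic a, tailI μ c (x-u) ∂μ) = ∫ u in Icc 0 a, tailI μ c (x-u) ∂μ := hLrw
      _ ≤ ∫ _ in Icc 0 a, ((1+ε') * tailI μ c x) ∂μ :=
          setIntegral_mono_on ((aux_int μ c x).integrableOn)
            (integrableOn_const (measure_ne_top μ _)) measurableSet_Icc
            (fun u hu => (hb u hu).2)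
      _ = (μ (Icc 0 a)).toReal * ((1+ε') * tailI μ c x) := by rw [setIntegral_const, smul_eq_mul]; rfl
      _ ≤ (1+ε') * tailI μ c x := by nlinarith [mul_nonneg (by linarith : (0:ℝ) ≤ 1+ε') hGpos.le]

lemma tendsto_measure_Ioi_zero (μ : Measure ℝ) [IsProbabilityMeasure μ] :
    Tendsto (fun t : ℝ => μ (Ioi t)) atTop (𝓝 0) := by
  rw [ENNReal.tendsto_nhds_zero]
  intro ε hε
  have hN : Tendsto (fun n : ℕ => μ (Ioi (n:ℝ))) atTop (𝓝 (μ (⋂ n : ℕ, Ioi (n:ℝ)))) := by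
    refine tendsto_measure_iInter_atTop (fun n => measurableSet_Ioi.nullMeasurableSet)
      (fun m n h => Ioi_subset_Ioi (by exact_mod_cast h)) ⟨0, measure_ne_top μ _⟩
  have hempty : (⋂ n : ℕ, Ioi (n:ℝ)) = ∅ := by
    ext t
    simp only [mem_iInter, mem_Ioi, mem_empty_iff_false, iff_false]
    push_neg
    obtain ⟨n, hn⟩ := exists_nat_ge t
    exact ⟨n, hn⟩
  rw [hempty, measure_empty] at hN
  obtain ⟨N, hN'⟩ := eventually_atTop.1 (ENNReal.tendsto_nhds_zero.1 hN ε hε)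
  filter_upwards [eventually_ge_atTop (N:ℝ)] with t ht
  exact le_trans (measure_mono (Ioi_subset_Ioi ht)) (hN' N le_rfl)

end

open ENNReal in
set_option maxHeartbeats 1000000 in
theorem sdelta_of_integral_negligible (μ : Measure ℝ) [IsProbabilityMeasure μ]
    (hsupp : μ (Iio 0) = 0) (c : ℝ) (hc : 0 < c) (hL : LongDelta μ c)
    (α : ℝ → ℝ) (hα : ∀ x, α x < x / 2) (hαtop : Tendsto α atTop atTop)
    (hins : ∀ ε > (0:ℝ), ∀ᶠ x in atTop, ∀ y : ℝ, |y| ≤ α x →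
      |tailI μ c (x + y) / tailI μ c x - 1| ≤ ε)
    (hint : Tendsto (fun x =>
        (∫ y in Ioc (α x) (x - α x), tailI μ c (x - y) ∂μ) / tailI μ c x) atTop (𝓝 0)) :
    SDelta μ c := by
  refine ⟨hL, ?_⟩
  -- pointwise decomposition
  have hsplit : ∀ x : ℝ, tailI (μ.conv μ) c x / tailI μ c x
      = (∫ u in Iic (α x), tailI μ c (x-u) ∂μ) / tailI μ c x
        + (∫ u in Ioc (α x) (x - α x), tailI μ c (x-u) ∂μ) / tailI μ c x
        + (∫ u in Ioi (x - α x), tailI μ c (x-u) ∂μ) / tailI μ c x := by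
    intro x
    rw [conv_tail_eq, split_eq μ c x (α x) (x - α x) (by linarith [hα x]), add_div, add_div]
  -- eventual facts
  have ev_pos : ∀ᶠ x in atTop, 0 < tailI μ c x := hL.1
  have ev_a0 : ∀ᶠ x in atTop, 0 ≤ α x := hαtop.eventually_ge_atTop 0
  have ev_small : Tendsto (fun x => (μ (Ioi (α x))).toReal) atTop (𝓝 0) := by
    have h1 : Tendsto (fun x => μ (Ioi (α x))) atTop (𝓝 0) :=
      (tendsto_measure_Ioi_zero μ).comp hαtop
    have h2 := (ENNReal.tendsto_toReal (a := 0) (by simp)).comp h1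
    exact h2
  have h2G' : ∀ᶠ z in atTop, tailI μ c z ≤ 2 * tailI μ c (z + c) := by
    filter_upwards [hL.1, (hL.2 c hc).eventually (eventually_gt_nhds (by norm_num : (1:ℝ)/2 < 1))]
      with z hz hratio
    have := (lt_div_iff₀ hz).1 hratio
    linarith
  obtain ⟨z₀, hz₀⟩ := eventually_atTop.1 h2G'
  have h2G : ∀ᶠ x in atTop, tailI μ c (x - α x - c) ≤ 2 * tailI μ c (x - α x) := by
    filter_upwards [eventually_ge_atTop (2*(z₀ + c))] with x hx
    have hax := hα x
    have hz : z₀ ≤ x - α x - c := by linarith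
    have h := hz₀ _ hz
    rw [show x - α x - c + c = x - α x from by ring] at h
    exact h
  -- the pointwise-bound extractor
  have mkhb : ∀ ε' : ℝ, 0 < ε' → ∀ x : ℝ, 0 < tailI μ c x →
      (∀ y : ℝ, |y| ≤ α x → |tailI μ c (x + y) / tailI μ c x - 1| ≤ ε') →
      ∀ u ∈ Icc 0 (α x), (1-ε') * tailI μ c x ≤ tailI μ c (x-u)
        ∧ tailI μ c (x-u) ≤ (1+ε') * tailI μ c x := by
    intro ε' hε' x hGx hins' u hu
    rw [mem_Icc] at hu
    have h := hins' (-u) (by rw [abs_neg, abs_of_nonneg hu.1]; exact hu.2)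
    rw [show x + -u = x - u from by ring] at h
    have h2 := abs_le.1 h
    constructor
    · have := (le_div_iff₀ hGx).1 (by linarith [h2.1] : 1-ε' ≤ tailI μ c (x-u) / tailI μ c x)
      linarith
    · have := (div_le_iff₀ hGx).1 (by linarith [h2.2] : tailI μ c (x-u) / tailI μ c x ≤ 1+ε')
      linarith
  -- T1
  have T1 : Tendsto (fun x => (∫ u in Iic (α x), tailI μ c (x-u) ∂μ) / tailI μ c x)
      atTop (𝓝 1) := by
    rw [Metric.tendsto_nhds]
    intro ε hε
    set ε' := min (ε/3) (1/2) with hε'def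
    have hε'pos : 0 < ε' := by
      apply lt_min <;> linarith
    have hε'le : ε' ≤ ε/3 := min_le_left _ _
    have hε'half : ε' ≤ 1/2 := min_le_right _ _
    filter_upwards [ev_pos, ev_a0, hins ε' hε'pos, ev_small.eventually_lt_const hε'pos]
      with x hGx ha0 hins' hd
    have hb := mkhb ε' hε'pos x hGx hins'
    obtain ⟨hlo, hhi⟩ := L1_bounds μ c hsupp x (α x) ε' ha0 hε'pos.le (by linarith) hb hGx
    set L := ∫ u in Iic (α x), tailI μ c (x-u) ∂μ with hLdef
    set d := (μ (Ioi (α x))).toReal with hddef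
    have hd0 : 0 ≤ d := ENNReal.toReal_nonneg
    have hdiv1 : L / tailI μ c x ≤ 1 + ε' := by
      rw [div_le_iff₀ hGx]; linarith
    have hdiv2 : (1 - d) * (1-ε') ≤ L / tailI μ c x := by
      rw [le_div_iff₀ hGx]; nlinarith
    have hkey : 1 - ε < (1-d)*(1-ε') := by nlinarith [mul_nonneg hd0 hε'pos.le]
    rw [Real.dist_eq, abs_lt]
    constructor
    · linarith
    · linarith
  -- T3
  have T3 : Tendsto (fun x => (∫ u in Ioi (x - α x), tailI μ c (x-u) ∂μ) / tailI μ c x)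
      atTop (𝓝 1) := by
    rw [Metric.tendsto_nhds]
    intro ε hε
    set ε' := min (ε/6) (1/2) with hε'def
    have hε'pos : 0 < ε' := by
      apply lt_min <;> linarith
    have hε'le : ε' ≤ ε/6 := min_le_left _ _
    have hε'half : ε' ≤ 1/2 := min_le_right _ _
    filter_upwards [ev_pos, ev_a0, hins ε' hε'pos, ev_small.eventually_lt_const hε'pos, h2G]
      with x hGx ha0 hins' hd h2
    have hb := mkhb ε' hε'pos x hGx hins'
    obtain ⟨hlo, hhi⟩ := L1_bounds μ c hsupp x (α x) ε' ha0 hε'pos.le (by linarith) hb hGx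
    have hge := J3_ge μ c x (α x)
    have hle := J3_le μ c x (α x) hc.le
    have hmid := mid_le μ c x (α x) hc.le
    have hta : tailI μ c (x - α x) ≤ (1+ε') * tailI μ c x := (hb (α x) ⟨ha0, le_rfl⟩).2
    set L3 := ∫ u in Ioi (x - α x), tailI μ c (x-u) ∂μ with hL3def
    set L1 := ∫ u in Iic (α x), tailI μ c (x-u) ∂μ with hL1def
    set d := (μ (Ioi (α x))).toReal with hddef
    have hd0 : 0 ≤ d := ENNReal.toReal_nonneg
    have hta0 : 0 ≤ tailI μ c (x - α x) := tailI_nonneg μ c _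
    have hmid2 : (∫ u in Ioc (α x) (α x + c), tailI μ c (x-u) ∂μ)
        ≤ d * (3 * ((1+ε') * tailI μ c x)) := by
      refine le_trans hmid ?_
      have : tailI μ c (x - α x - c) + tailI μ c (x - α x) ≤ 3 * ((1+ε') * tailI μ c x) := by
        nlinarith
      nlinarith
    have hup : L3 ≤ (1+ε') * tailI μ c x + d * (3 * ((1+ε') * tailI μ c x)) := by
      calc L3 ≤ L1 + ∫ u in Ioc (α x) (α x + c), tailI μ c (x-u) ∂μ := hle
        _ ≤ (1+ε') * tailI μ c x + d * (3 * ((1+ε') * tailI μ c x)) := by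
            exact add_le_add hhi hmid2
    have hdn : L1 ≤ L3 := hge
    have hdiv1 : L3 / tailI μ c x ≤ (1 + ε') * (1 + 3*d) := by
      rw [div_le_iff₀ hGx]; nlinarith
    have hdiv2 : (1 - d) * (1-ε') ≤ L3 / tailI μ c x := by
      rw [le_div_iff₀ hGx]; nlinarith
    have hkey : 1 - ε < (1-d)*(1-ε') := by nlinarith [mul_nonneg hd0 hε'pos.le]
    have hp1 : ε' * d < ε' * ε' := mul_lt_mul_of_pos_left hd hε'pos
    have hp2 : ε' * ε' ≤ ε' * (1/2) := mul_le_mul_of_nonneg_left hε'half hε'pos.le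
    have hkey2 : (1+ε')*(1+3*d) < 1 + ε := by nlinarith
    rw [Real.dist_eq, abs_lt]
    constructor
    · linarith
    · linarith
  have hsum := (T1.add hint).add T3
  rw [show (1:ℝ) + 0 + 1 = 2 from by norm_num] at hsum
  exact Tendsto.congr (fun x => (hsplit x).symm) hsum
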